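/- Let τ = {nop, set, res} ∪ ω be a type of nets with nonempty ω ⊆ {used, free}, and let φ be a cubic monotone 3-CNF with m clauses. The key event k is τ-inhibitable at the key state q in the loop-enhanced TS A^×_φ if and only if φ has a one-in-three model. -/

import Mathlib

/-!
Every interaction of `τ` fixes the value it produces, so the loops of `A^×_φ` impose no
condition beyond those of `A^+_φ`. Complementing a region swaps `used` and `free`, so an
inhibition of `k` at `q` may be taken with `sig k = used` and `sup q = false`. Then every
`t_{i,0}` is in the support, and the auxiliary arms `m_*` and `p_{i,*}` force `t_{i,5}` out of
it. Along the clause gadget (a cube on the three variables of the clause, with reverse edges)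
a path from `t_{i,0}` to `t_{i,5}` must reset the support, so some variable of every clause is
`res`; two of them would force the reverse event of one to be both `set` and not. Conversely the variables of a one-in-three model, as resets, together with
`set` on their reverse events and `used` on `k`, form an inhibiting region.
-/

/-! Boolean interactions -/

abbrev Interaction := Bool → Option Bool

def iNop : Interaction := fun b => some b
def iInp : Interaction := fun b => if b then some false else none
def iOut : Interaction := fun b => if b then none else some true
def iSet : Interaction := fun _ => some true
def iRes : Interaction := fun _ => some false
def iSwap : Interaction := fun b => some (!b)
def iUsed : Interaction := fun b => if b then some true else none
def iFree : Interaction := fun b => if b then none else some false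

def allInteractions : Set Interaction :=
  {iNop, iInp, iOut, iSet, iRes, iSwap, iUsed, iFree}

/-! Transition systems and regions -/

structure TS (S E : Type) where
  delta : S → E → Option S
  init : S

def IsRegion {S E : Type} (A : TS S E) (τ : Set Interaction)
    (sup : S → Bool) (sig : E → Interaction) : Prop :=
  (∀ e, sig e ∈ τ) ∧
  ∀ s e s', A.delta s e = some s' → sig e (sup s) = some (sup s')

def Separable {S E : Type} (A : TS S E) (τ : Set Interaction) (s s' : S) : Prop :=
  ∃ sup sig, IsRegion A τ sup sig ∧ sup s ≠ sup s'

def Inhibitable {S E : Type} (A : TS S E) (τ : Set Interaction) (e : E) (s : S) : Prop :=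
  ∃ sup sig, IsRegion A τ sup sig ∧ sig e (sup s) = none

def SSP {S E : Type} (A : TS S E) (τ : Set Interaction) : Prop :=
  ∀ s s' : S, s ≠ s' → Separable A τ s s'

def ESSP {S E : Type} (A : TS S E) (τ : Set Interaction) : Prop :=
  ∀ (s : S) (e : E), A.delta s e = none → Inhibitable A τ e s

def Feasible {S E : Type} (A : TS S E) (τ : Set Interaction) : Prop :=
  SSP A τ ∧ ESSP A τ

def Reachable {S E : Type} (A : TS S E) : Prop :=
  ∀ s : S, Relation.ReflTransGen (fun x y => ∃ e, A.delta x e = some y) A.init s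

/-! The extended TS A^+_φ and its loop-enhancement A^×_φ for a cubic monotone
3-CNF φ with m clauses, given by X : Fin m → Fin 3 → V. -/

inductive QState (m : ℕ) where
  | s0 | s1 | q
  | t (i : Fin m) (j : Fin 9)
  | mm (j : Fin 5)
  | p (i : Fin m) (j : Fin 4)

inductive QEvent (m : ℕ) (V : Type) where
  | k | h
  | hc (i : Fin m)
  | r (i : Fin m)
  | var (v : V)
  | ea | ec | eu | ev
  | ai (i : Fin m)
  | bi (i : Fin m)
  | x (i : Fin m) (j : Fin 3)

/-- The clause gadget of clause i (as in A_φ). -/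
def gadgetQ {m : ℕ} {V : Type} [DecidableEq V] (X : Fin m → Fin 3 → V)
    (i : Fin m) (j : Fin 9) (v : V) : Option (QState m) :=
  if j = 0 then
    if v = X i 0 then some (.t i 1)
    else if v = X i 1 then some (.t i 7)
    else if v = X i 2 then some (.t i 3) else none
  else if j = 1 then
    if v = X i 1 then some (.t i 2)
    else if v = X i 2 then some (.t i 4) else none
  else if j = 2 then
    if v = X i 2 then some (.t i 5) else none
  else if j = 3 then
    if v = X i 0 then some (.t i 4)
    else if v = X i 1 then some (.t i 6) else none
  else if j = 4 then
    if v = X i 1 then some (.t i 5) else none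
  else if j = 6 then
    if v = X i 0 then some (.t i 5) else none
  else if j = 7 then
    if v = X i 0 then some (.t i 2)
    else if v = X i 2 then some (.t i 6) else none
  else none

/-- The reverse transitions t' --x_{i,j}--> t for every clause-gadget
transition t --X_{i,j}--> t'. -/
def xgadget {m : ℕ} (i : Fin m) (a : Fin 9) (j : Fin 3) : Option (QState m) :=
  if j = 0 then
    if a = 1 then some (.t i 0)
    else if a = 4 then some (.t i 3)
    else if a = 5 then some (.t i 6)
    else if a = 2 then some (.t i 7) else none
  else if j = 1 then
    if a = 7 then some (.t i 0)
    else if a = 2 then some (.t i 1)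
    else if a = 6 then some (.t i 3)
    else if a = 5 then some (.t i 4) else none
  else
    if a = 3 then some (.t i 0)
    else if a = 4 then some (.t i 1)
    else if a = 5 then some (.t i 2)
    else if a = 6 then some (.t i 7) else none

/-- The transition function of the extended TS A^+_φ. -/
def deltaPlus {m : ℕ} {V : Type} [DecidableEq V] (X : Fin m → Fin 3 → V) :
    QState m → QEvent m V → Option (QState m) :=
  fun s e =>
    match s, e with
    | .s0, .k => some .s1
    | .s0, .h => some .q
    | .s0, .r i => some (.t i 0)
    | .s0, .ea => some (.mm 0)
    | .s0, .ai i => some (.p i 0)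
    | .s1, .r i => some (.t i 8)
    | .q, .hc i => some (.t i 5)
    | .t i j, .k => if j = 0 then some (.t i 8) else none
    | .t i j, .var v => gadgetQ X i j v
    | .t i j, .x i' j' => if i' = i then xgadget i j j' else none
    | .mm j, .k =>
        if j = 0 then some (.mm 1) else if j = 3 then some (.mm 2) else none
    | .mm j, .ev => if j = 1 then some (.mm 2) else none
    | .mm j, .ec => if j = 0 then some (.mm 3) else none
    | .mm j, .h => if j = 3 then some (.mm 4) else none
    | .mm j, .eu => if j = 0 then some (.mm 4) else none
    | .p i j, .ev => if j = 0 then some (.p i 1) else none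
    | .p i j, .bi i' => if i' = i ∧ j = 1 then some (.p i 2) else none
    | .p i j, .eu => if j = 2 then some (.p i 3) else none
    | .p i j, .hc i' => if i' = i ∧ j = 0 then some (.p i 3) else none
    | _, _ => none

open Classical in
/-- The loop-enhancement A^×_φ: all transitions of A^+_φ together with a loop
at the target of every transition of A^+_φ (for the same event). -/
noncomputable def AphiX {m : ℕ} {V : Type} [DecidableEq V]
    (X : Fin m → Fin 3 → V) : TS (QState m) (QEvent m V) where
  delta := fun s e =>
    match deltaPlus X s e with
    | some s' => some s'
    | none => if ∃ z, deltaPlus X z e = some s then some s else none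
  init := .s0

/-- φ is a cubic monotone 3-CNF: each clause consists of three distinct
variables and every variable is a member of exactly three clauses. -/
def CubicMonotone {m : ℕ} {V : Type} [DecidableEq V] [Fintype V]
    (X : Fin m → Fin 3 → V) : Prop :=
  (∀ i : Fin m, Function.Injective (X i)) ∧
  (∀ v : V,
    (Finset.univ.filter (fun p : Fin m × Fin 3 => X p.1 p.2 = v)).card = 3)

/-- M is a one-in-three model of φ: it hits every clause exactly once. -/
def OneInThree {m : ℕ} {V : Type} (X : Fin m → Fin 3 → V) (M : Set V) : Prop :=
  ∀ i : Fin m, ∃! j : Fin 3, X i j ∈ M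


def idempotentType : Set Interaction := {iNop, iSet, iRes, iUsed, iFree}

section Interactions

variable {f : Interaction} {b b' : Bool}

lemma fixes_image_of_mem_idempotentType (hf : f ∈ idempotentType) (h : f b = some b') :
    f b' = some b' := by
  simp only [idempotentType, Set.mem_insert_iff, Set.mem_singleton_iff] at hf
  rcases hf with rfl | rfl | rfl | rfl | rfl <;> cases b <;> cases b' <;>
    simp_all [iNop, iSet, iRes, iUsed, iFree]

lemma eq_iRes_of_mem_idempotentType (hf : f ∈ idempotentType) (h : f true = some false) :
    f = iRes := by
  simp only [idempotentType, Set.mem_insert_iff, Set.mem_singleton_iff] at hf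
  rcases hf with rfl | rfl | rfl | rfl | rfl <;> simp_all [iNop, iSet, iRes, iUsed, iFree]

lemma eq_iSet_of_mem_idempotentType (hf : f ∈ idempotentType) (h : f false = some true) :
    f = iSet := by
  simp only [idempotentType, Set.mem_insert_iff, Set.mem_singleton_iff] at hf
  rcases hf with rfl | rfl | rfl | rfl | rfl <;> simp_all [iNop, iSet, iRes, iUsed, iFree]

lemma iUsed_eq_some_iff : iUsed b = some b' ↔ b = true ∧ b' = true := by
  cases b <;> cases b' <;> simp [iUsed]

lemma iRes_eq_some_iff : iRes b = some b' ↔ b' = false := by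
  simp [iRes, eq_comm]

lemma iSet_eq_some_iff : iSet b = some b' ↔ b' = true := by
  simp [iSet, eq_comm]

def iCompl (f : Interaction) : Interaction := fun b => (f !b).map (!·)

lemma iCompl_apply_not : iCompl f (!b) = (f b).map (!·) := by
  simp [iCompl]

@[simp] lemma iCompl_nop : iCompl iNop = iNop := by funext b; cases b <;> rfl
@[simp] lemma iCompl_set : iCompl iSet = iRes := by funext b; cases b <;> rfl
@[simp] lemma iCompl_res : iCompl iRes = iSet := by funext b; cases b <;> rfl
@[simp] lemma iCompl_used : iCompl iUsed = iFree := by funext b; cases b <;> rfl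
@[simp] lemma iCompl_free : iCompl iFree = iUsed := by funext b; cases b <;> rfl

lemma iCompl_mem_idempotentType (hf : f ∈ idempotentType) : iCompl f ∈ idempotentType := by
  simp only [idempotentType, Set.mem_insert_iff, Set.mem_singleton_iff] at hf ⊢
  rcases hf with rfl | rfl | rfl | rfl | rfl <;> simp

end Interactions

section Regions

variable {S E : Type} {A : TS S E} {τ τ' : Set Interaction} {sup : S → Bool}
  {sig : E → Interaction} {e : E} {s s' : S}

lemma IsRegion.mono (hreg : IsRegion A τ sup sig) (hτ : τ ⊆ τ') : IsRegion A τ' sup sig :=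
  ⟨fun e => hτ (hreg.1 e), hreg.2⟩

lemma IsRegion.compl (hreg : IsRegion A τ sup sig) (hτ : ∀ f ∈ τ, iCompl f ∈ τ') :
    IsRegion A τ' (fun s => !sup s) (fun e => iCompl (sig e)) :=
  ⟨fun e => hτ _ (hreg.1 e), fun s e s' h => by simp [iCompl_apply_not, hreg.2 s e s' h]⟩

lemma Inhibitable.mono (h : Inhibitable A τ e s) (hτ : τ ⊆ τ') : Inhibitable A τ' e s :=
  let ⟨sup, sig, hreg, hnone⟩ := h
  ⟨sup, sig, hreg.mono hτ, hnone⟩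

lemma IsRegion.sup_eq_true_of_iUsed (hreg : IsRegion A τ sup sig) (he : sig e = iUsed)
    (h : A.delta s e = some s') : sup s = true := by
  have := hreg.2 s e s' h
  rw [he, iUsed_eq_some_iff] at this
  exact this.1

lemma IsRegion.sup_eq_false_of_iRes (hreg : IsRegion A τ sup sig) (he : sig e = iRes)
    (h : A.delta s e = some s') : sup s' = false := by
  have := hreg.2 s e s' h
  rwa [he, iRes_eq_some_iff] at this

lemma IsRegion.eq_iRes (hreg : IsRegion A τ sup sig) (hτ : τ ⊆ idempotentType)
    (h : A.delta s e = some s') (hs : sup s = true) (hs' : sup s' = false) : sig e = iRes := by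
  have := hreg.2 s e s' h
  rw [hs, hs'] at this
  exact eq_iRes_of_mem_idempotentType (hτ (hreg.1 e)) this

lemma exists_iUsed_of_inhibitable (h : Inhibitable A idempotentType e s) :
    ∃ sup sig, IsRegion A idempotentType sup sig ∧ sig e = iUsed ∧ sup s = false := by
  obtain ⟨sup, sig, hreg, hnone⟩ := h
  have he := hreg.1 e
  simp only [idempotentType, Set.mem_insert_iff, Set.mem_singleton_iff] at he
  rcases he with he | he | he | he | he <;> rw [he] at hnone
  · simp [iNop] at hnone
  · simp [iSet] at hnone
  · simp [iRes] at hnone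
  · cases hs : sup s
    · exact ⟨sup, sig, hreg, he, hs⟩
    · simp [iUsed, hs] at hnone
  · cases hs : sup s
    · simp [iFree, hs] at hnone
    · exact ⟨_, _, hreg.compl fun _ => iCompl_mem_idempotentType, by simp [he], by simp [hs]⟩

lemma inhibitable_of_iUsed (hreg : IsRegion A {iNop, iSet, iRes, iUsed} sup sig)
    (he : sig e = iUsed) (hs : sup s = false) {ω : Set Interaction}
    (hω : iUsed ∈ ω ∨ iFree ∈ ω) : Inhibitable A ({iNop, iSet, iRes} ∪ ω) e s := by
  rcases hω with hω | hω
  · refine ⟨sup, sig, hreg.mono ?_, by simp [he, hs, iUsed]⟩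
    rintro f (rfl | rfl | rfl | rfl) <;> simp [hω]
  · refine ⟨_, _, hreg.compl ?_, by simp [he, hs, iFree]⟩
    rintro f (rfl | rfl | rfl | rfl) <;> simp [hω]

end Regions

section LoopEnhancement

variable {S E : Type}

open Classical in
noncomputable def TS.loopEnhance (A : TS S E) : TS S E where
  delta s e :=
    match A.delta s e with
    | some s' => some s'
    | none => if ∃ z, A.delta z e = some s then some s else none
  init := A.init

lemma isRegion_loopEnhance_iff {A : TS S E} {τ : Set Interaction} (hτ : τ ⊆ idempotentType)
    {sup : S → Bool} {sig : E → Interaction} :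
    IsRegion A.loopEnhance τ sup sig ↔ IsRegion A τ sup sig := by
  refine ⟨fun hreg => ⟨hreg.1, fun s e s' h => hreg.2 s e s' (by simp [TS.loopEnhance, h])⟩,
    fun hreg => ⟨hreg.1, fun s e s' h => ?_⟩⟩
  simp only [TS.loopEnhance] at h
  cases hd : A.delta s e with
  | some s₂ =>
    rw [hd, Option.some.injEq] at h
    exact h ▸ hreg.2 s e s₂ hd
  | none =>
    rw [hd] at h
    split_ifs at h with hz
    obtain ⟨z, hz⟩ := hz
    cases h
    exact fixes_image_of_mem_idempotentType (hτ (hreg.1 e)) (hreg.2 z e s hz)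

lemma inhibitable_loopEnhance_iff {A : TS S E} {τ : Set Interaction} (hτ : τ ⊆ idempotentType)
    {e : E} {s : S} : Inhibitable A.loopEnhance τ e s ↔ Inhibitable A τ e s := by
  simp only [Inhibitable, isRegion_loopEnhance_iff hτ]

end LoopEnhancement

def Aplus {m : ℕ} {V : Type} [DecidableEq V] (X : Fin m → Fin 3 → V) :
    TS (QState m) (QEvent m V) :=
  ⟨deltaPlus X, .s0⟩

lemma AphiX_eq_loopEnhance {m : ℕ} {V : Type} [DecidableEq V] (X : Fin m → Fin 3 → V) :
    AphiX X = (Aplus X).loopEnhance := by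
  simp only [AphiX, TS.loopEnhance, Aplus, TS.mk.injEq, and_true]
  funext s e
  cases deltaPlus X s e <;> rfl

section Cube

variable {m : ℕ}

/-- State `t_{i,j}` of a clause gadget is the corner of the cube on `{0,1,2}` given by the
indices of the variables already passed; `t_{i,8}` is a second copy of `t_{i,0}`. -/
def gadgetSet : Fin 9 → Finset (Fin 3)
  | 1 => {0}
  | 2 => {0, 1}
  | 3 => {2}
  | 4 => {0, 2}
  | 5 => Finset.univ
  | 6 => {1, 2}
  | 7 => {1}
  | _ => ∅

lemma xgadget_eq_some {i : Fin m} {j : Fin 9} {a : Fin 3} {s' : QState m}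
    (h : xgadget i j a = some s') :
    ∃ j', s' = .t i j' ∧ a ∉ gadgetSet j' ∧ gadgetSet j = insert a (gadgetSet j') := by
  obtain rfl | rfl | rfl : a = 0 ∨ a = 1 ∨ a = 2 := by omega
  all_goals
    simp only [xgadget, Fin.reduceEq, ↓reduceIte] at h
    split_ifs at h <;> cases h <;> subst_vars <;> exact ⟨_, rfl, by decide, by decide⟩

lemma gadgetQ_eq_some {V : Type} [DecidableEq V] {X : Fin m → Fin 3 → V} {i : Fin m} {j : Fin 9}
    {v : V} {s' : QState m} (h : gadgetQ X i j v = some s') :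
    ∃ a j', v = X i a ∧ s' = .t i j' ∧ a ∉ gadgetSet j ∧
      gadgetSet j' = insert a (gadgetSet j) := by
  simp only [gadgetQ] at h
  split_ifs at h <;> cases h <;> subst_vars <;>
    first
    | exact ⟨0, _, rfl, rfl, by decide, by decide⟩
    | exact ⟨1, _, rfl, rfl, by decide, by decide⟩
    | exact ⟨2, _, rfl, rfl, by decide, by decide⟩

end Cube

section ModelOfRegion

variable {m : ℕ} {V : Type} [DecidableEq V] {X : Fin m → Fin 3 → V}
  {sup : QState m → Bool} {sig : QEvent m V → Interaction}

/-- The face `∅, {a}, {b}, {a,b}` of a clause gadget cannot carry two `res` variables: they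
force `sup` to be `false` on `{a}`, `{b}` and `{a,b}`, so the reverse event `x_a` maps
`{a} ↦ ∅` as `set` but must also map `{a,b} ↦ {b}`. -/
lemma false_of_two_iRes_square {fa fb xa : Interaction} (hxa : xa ∈ idempotentType)
    (ha : fa = iRes) (hb : fb = iRes) {u₀ uₐ u_b uₐ_b : Bool} (h₀ : u₀ = true)
    (eₐ : fa u₀ = some uₐ) (e_b : fb u₀ = some u_b) (eₐ_b : fa u_b = some uₐ_b)
    (rₐ : xa uₐ = some u₀) (rₐ_b : xa uₐ_b = some u_b) : False := by
  subst ha hb h₀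
  rw [iRes_eq_some_iff] at eₐ e_b eₐ_b
  subst eₐ e_b eₐ_b
  rw [eq_iSet_of_mem_idempotentType hxa rₐ, iSet_eq_some_iff] at rₐ_b
  exact Bool.false_ne_true rₐ_b

lemma exists_iRes_of_gadget {i : Fin m} (hreg : IsRegion (Aplus X) idempotentType sup sig)
    (h₀ : sup (.t i 0) = true) (h₅ : sup (.t i 5) = false) :
    ∃ a, sig (.var (X i a)) = iRes := by
  have res_of {a j j'} (h : (Aplus X).delta (.t i j) (.var (X i a)) = some (.t i j'))
      (hs : sup (.t i j) = true) (hs' : sup (.t i j') = false) : sig (.var (X i a)) = iRes :=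
    hreg.eq_iRes le_rfl h hs hs'
  cases h₁ : sup (.t i 1)
  · exact ⟨0, res_of (by simp [Aplus, deltaPlus, gadgetQ]) h₀ h₁⟩
  cases h₂ : sup (.t i 2)
  · exact ⟨1, res_of (by simp [Aplus, deltaPlus, gadgetQ]) h₁ h₂⟩
  · exact ⟨2, res_of (by simp [Aplus, deltaPlus, gadgetQ]) h₂ h₅⟩

lemma eq_of_iRes_of_gadget {i : Fin m} (hX : Function.Injective (X i))
    (hreg : IsRegion (Aplus X) idempotentType sup sig) (h₀ : sup (.t i 0) = true) {a b : Fin 3}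
    (ha : sig (.var (X i a)) = iRes) (hb : sig (.var (X i b)) = iRes) : a = b := by
  by_contra hne
  wlog hab : a < b generalizing a b
  · exact this hb ha (Ne.symm hne) (lt_of_le_of_ne (not_lt.1 hab) (Ne.symm hne))
  have fwd : ∀ j a j', gadgetQ X i j (X i a) = some (.t i j') →
      sig (.var (X i a)) (sup (.t i j)) = some (sup (.t i j')) :=
    fun j a j' h => hreg.2 _ _ _ h
  have bwd : ∀ j a j', xgadget i j a = some (.t i j') →
      sig (.x i a) (sup (.t i j)) = some (sup (.t i j')) :=
    fun j a j' h => hreg.2 _ _ _ (by simpa [Aplus, deltaPlus] using h)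
  have e₀₁ := fwd 0 0 1 (by simp [gadgetQ])
  have e₀₇ := fwd 0 1 7 (by simp [gadgetQ, hX.eq_iff])
  have e₀₃ := fwd 0 2 3 (by simp [gadgetQ, hX.eq_iff])
  have hx := hreg.1 (.x i a)
  fin_cases a <;> fin_cases b <;> simp at hab
  · exact false_of_two_iRes_square hx ha hb h₀ e₀₁ e₀₇ (fwd 7 0 2 (by simp [gadgetQ]))
      (bwd 1 0 0 rfl) (bwd 2 0 7 rfl)
  · exact false_of_two_iRes_square hx ha hb h₀ e₀₁ e₀₃ (fwd 3 0 4 (by simp [gadgetQ]))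
      (bwd 1 0 0 rfl) (bwd 4 0 3 rfl)
  · exact false_of_two_iRes_square hx ha hb h₀ e₀₇ e₀₃
      (fwd 3 1 6 (by simp [gadgetQ, hX.eq_iff])) (bwd 7 1 0 rfl) (bwd 6 1 3 rfl)

/-- `h` resets along `s₀ → q`, hence along `m₃ → m₄`, which makes `u` a reset along
`m₀ → m₄`; so along `p_{i,0} → p_{i,3}` the event `h_i` must fix `false`, and it carries
`sup q = false` to `t_{i,5}`. -/
lemma sup_gadget_ends (hreg : IsRegion (Aplus X) idempotentType sup sig)
    (hk : sig .k = iUsed) (hq : sup .q = false) (i : Fin m) :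
    sup (.t i 0) = true ∧ sup (.t i 5) = false := by
  have hs₀ : sup .s0 = true := hreg.sup_eq_true_of_iUsed hk (s' := .s1) rfl
  have hh : sig .h = iRes := hreg.eq_iRes le_rfl (s := .s0) rfl hs₀ hq
  have hm₀ : sup (.mm 0) = true := hreg.sup_eq_true_of_iUsed hk (s' := .mm 1) rfl
  have hm₃ : sup (.mm 3) = true := hreg.sup_eq_true_of_iUsed hk (s' := .mm 2) rfl
  have hm₄ : sup (.mm 4) = false := hreg.sup_eq_false_of_iRes hh (s := .mm 3) rfl
  have hu : sig .eu = iRes := hreg.eq_iRes le_rfl (s := .mm 0) rfl hm₀ hm₄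
  have hp₃ : sup (.p i 3) = false := hreg.sup_eq_false_of_iRes hu (s := .p i 2) rfl
  have hhᵢ : sig (.hc i) false = some false := by
    have h := hreg.2 (.p i 0) (.hc i) (.p i 3) (by simp [Aplus, deltaPlus])
    exact fixes_image_of_mem_idempotentType (hreg.1 _) (hp₃ ▸ h)
  have h₅ := hreg.2 .q (.hc i) (.t i 5) rfl
  rw [hq, hhᵢ, Option.some.injEq] at h₅
  exact ⟨hreg.sup_eq_true_of_iUsed hk (s' := .t i 8) rfl, h₅.symm⟩

lemma oneInThree_of_region (hX : ∀ i, Function.Injective (X i))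
    (hreg : IsRegion (Aplus X) idempotentType sup sig) (hk : sig .k = iUsed)
    (hq : sup .q = false) : OneInThree X {v | sig (.var v) = iRes} := by
  intro i
  obtain ⟨h₀, h₅⟩ := sup_gadget_ends hreg hk hq i
  obtain ⟨a, ha⟩ := exists_iRes_of_gadget hreg h₀ h₅
  exact ⟨a, ha, fun b hb => eq_of_iRes_of_gadget (hX i) hreg h₀ hb ha⟩

end ModelOfRegion

section RegionOfModel

variable {m : ℕ} {V : Type} {X : Fin m → Fin 3 → V}

def modelSup (js : Fin m → Fin 3) : QState m → Bool
  | .q => false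
  | .t i j => js i ∉ gadgetSet j
  | .mm j => j ≠ 4
  | .p _ j => j ≠ 3
  | _ => true

open Classical in
noncomputable def modelSig (X : Fin m → Fin 3 → V) (M : Set V) : QEvent m V → Interaction
  | .k => iUsed
  | .h | .hc _ | .eu => iRes
  | .var v => if v ∈ M then iRes else iNop
  | .x i a => if X i a ∈ M then iSet else iNop
  | _ => iNop

variable {M : Set V} {js : Fin m → Fin 3}

lemma OneInThree.exists_index (hM : OneInThree X M) :
    ∃ js : Fin m → Fin 3, ∀ i a, X i a ∈ M ↔ a = js i := by
  choose js hjs using hM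
  exact ⟨js, fun i a => ⟨(hjs i).2 a, fun h => h ▸ (hjs i).1⟩⟩

lemma modelSig_mem : ∀ e, modelSig X M e ∈ ({iNop, iSet, iRes, iUsed} : Set Interaction) := by
  intro e
  cases e <;> simp only [modelSig] <;> try split_ifs
  all_goals simp

lemma modelSig_var_step (hjs : ∀ i a, X i a ∈ M ↔ a = js i) {i : Fin m} {a : Fin 3}
    {G G' : Finset (Fin 3)} (ha : a ∉ G) (hG' : G' = insert a G) :
    modelSig X M (.var (X i a)) (decide (js i ∉ G)) = some (decide (js i ∉ G')) := by
  subst hG'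
  by_cases h : a = js i
  · subst h
    simp [modelSig, hjs, ha, iRes]
  · simp [modelSig, hjs, h, Ne.symm h, iNop]

lemma modelSig_x_step (hjs : ∀ i a, X i a ∈ M ↔ a = js i) {i : Fin m} {a : Fin 3}
    {G G' : Finset (Fin 3)} (ha : a ∉ G) (hG' : G' = insert a G) :
    modelSig X M (.x i a) (decide (js i ∉ G')) = some (decide (js i ∉ G)) := by
  subst hG'
  by_cases h : a = js i
  · subst h
    simp [modelSig, hjs, ha, iSet]
  · simp [modelSig, hjs, h, Ne.symm h, iNop]

lemma isRegion_model [DecidableEq V] (hjs : ∀ i a, X i a ∈ M ↔ a = js i) :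
    IsRegion (Aplus X) {iNop, iSet, iRes, iUsed} (modelSup js) (modelSig X M) := by
  refine ⟨modelSig_mem, fun s e s' h => ?_⟩
  cases s <;> cases e
  case t.var i j v =>
    obtain ⟨a, j', rfl, rfl, ha, hG⟩ := gadgetQ_eq_some h
    exact modelSig_var_step hjs ha hG
  case t.x i j i' a =>
    obtain ⟨rfl, h⟩ : i' = i ∧ xgadget i j a = some s' := by simpa [Aplus, deltaPlus] using h
    obtain ⟨j', rfl, ha, hG⟩ := xgadget_eq_some h
    exact modelSig_x_step hjs ha hG
  all_goals
    simp only [Aplus, deltaPlus] at h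
    (try split_ifs at h) <;> (try simp only [Option.some.injEq, reduceCtorEq] at h) <;>
      (try obtain ⟨⟨rfl, rfl⟩⟩ := ‹_ ∧ _›) <;> subst_vars <;>
      simp [modelSup, modelSig, gadgetSet, iNop, iRes, iUsed]

end RegionOfModel

/-- k is τ-inhibitable at q in A^×_φ iff φ has a one-in-three
model, for τ = {nop, set, res} ∪ ω with nonempty ω ⊆ {used, free}. -/
theorem key_inhibitable_iff_model_loops {m : ℕ} {V : Type} [DecidableEq V] [Fintype V]
    (X : Fin m → Fin 3 → V) (hcubic : CubicMonotone X)
    (ω : Set Interaction) (hω : ω ⊆ {iUsed, iFree}) (hne : ω.Nonempty) :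
    Inhibitable (AphiX X) ({iNop, iSet, iRes} ∪ ω) QEvent.k QState.q ↔
      ∃ M : Set V, OneInThree X M := by
  have hτ : {iNop, iSet, iRes} ∪ ω ⊆ idempotentType :=
    Set.union_subset (by simp [idempotentType, Set.insert_subset_iff])
      (hω.trans (by simp [idempotentType, Set.insert_subset_iff]))
  rw [AphiX_eq_loopEnhance, inhibitable_loopEnhance_iff hτ]
  constructor
  · intro h
    obtain ⟨sup, sig, hreg, hk, hq⟩ := exists_iUsed_of_inhibitable (h.mono hτ)
    exact ⟨_, oneInThree_of_region hcubic.1 hreg hk hq⟩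
  · rintro ⟨M, hM⟩
    obtain ⟨js, hjs⟩ := hM.exists_index
    obtain ⟨η, hη⟩ := hne
    refine inhibitable_of_iUsed (isRegion_model hjs) rfl rfl ?_
    rcases hω hη with rfl | rfl <;> simp [hη]
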